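/- In the origami monoid O_n, for indices i, j with |i-j|=1 and any generator type γ ∈ {α, β}, the relation γ̄_i γ_i γ̄_i γ_j = γ̄_i γ_i γ_j holds. -/
import Mathlib


namespace Origami

/-- Generators of the origami monoid: a type bit (`true` for α, `false` for β)
and an index in `Fin (n-1)` (so indices `1,…,n-1` are represented by `0,…,n-2`). -/
inductive Gen (n : ℕ) : Type
  | mk (t : Bool) (i : Fin (n - 1))
deriving DecidableEq

/-- Words over the generators. -/
abbrev W (n : ℕ) := FreeMonoid (Gen n)

/-- The word consisting of the single generator of type `t` and index `i`. -/
def go {n : ℕ} (t : Bool) (i : Fin (n - 1)) : W n := FreeMonoid.of (Gen.mk t i)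

/-- `|i - j| = 1`. -/
def adj {n : ℕ} (i j : Fin (n - 1)) : Prop := i.val + 1 = j.val ∨ j.val + 1 = i.val

/-- `|i - j| ≥ 2`. -/
def far {n : ℕ} (i j : Fin (n - 1)) : Prop := i.val + 2 ≤ j.val ∨ j.val + 2 ≤ i.val

/-- The defining relations (1)–(5), (1a), (2a), (3a) of the origami monoid. -/
inductive Rel (n : ℕ) : W n → W n → Prop
  | idem (t : Bool) (i : Fin (n - 1)) : Rel n (go t i * go t i) (go t i)
  | jones (t : Bool) (i j : Fin (n - 1)) (h : adj i j) :
      Rel n (go t i * go t j * go t i) (go t i)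
  | inter (t : Bool) (i j : Fin (n - 1)) (h : i ≠ j) :
      Rel n (go t i * go (!t) j) (go (!t) j * go t i)
  | intra (t : Bool) (i j : Fin (n - 1)) (h : far i j) :
      Rel n (go t i * go t j) (go t j * go t i)
  | idemA (t : Bool) (i : Fin (n - 1)) :
      Rel n (go t i * go (!t) i * (go t i * go (!t) i)) (go t i * go (!t) i)
  | jonesA (t : Bool) (i j : Fin (n - 1)) (h : adj i j) :
      Rel n (go t i * go (!t) i * (go t j * go (!t) j) * (go t i * go (!t) i))
            (go t i * go (!t) i)

/-- The congruence generated by the origami relations. -/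
def oriCon (n : ℕ) : Con (W n) := conGen (Rel n)

/-- The origami monoid `O_n`. -/
abbrev O (n : ℕ) := (oriCon n).Quotient

/-- The image of a generator in `O_n`. -/
def gen {n : ℕ} (t : Bool) (i : Fin (n - 1)) : O n := (oriCon n).mk' (go t i)

/-- The generator `α_i`. -/
def genA {n : ℕ} (i : Fin (n - 1)) : O n := gen true i

/-- The generator `β_i`. -/
def genB {n : ℕ} (i : Fin (n - 1)) : O n := gen false i

end Origami

namespace Origami

lemma gen_rel {n : ℕ} {x y : W n} (h : Rel n x y) :
    (oriCon n).mk' x = (oriCon n).mk' y :=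
  ((oriCon n).eq).mpr (ConGen.Rel.of _ _ h)

lemma gen_idem {n : ℕ} (t : Bool) (i : Fin (n - 1)) :
    gen t i * gen t i = gen (n := n) t i := by
  simpa [gen, map_mul] using gen_rel (Rel.idem t i)

lemma gen_jones {n : ℕ} (t : Bool) (i j : Fin (n - 1)) (h : adj i j) :
    gen t i * gen t j * gen t i = gen (n := n) t i := by
  simpa [gen, map_mul] using gen_rel (Rel.jones t i j h)

lemma gen_inter {n : ℕ} (t : Bool) (i j : Fin (n - 1)) (h : i ≠ j) :
    gen t i * gen (!t) j = gen (!t) j * gen (n := n) t i := by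
  simpa [gen, map_mul] using gen_rel (Rel.inter t i j h)

lemma gen_jonesA {n : ℕ} (t : Bool) (i j : Fin (n - 1)) (h : adj i j) :
    gen t i * gen (!t) i * (gen t j * gen (!t) j) * (gen t i * gen (!t) i)
      = gen t i * gen (n := n) (!t) i := by
  simpa [gen, map_mul] using gen_rel (Rel.jonesA t i j h)

end Origami

open Origami in
/-- Lemma (c): `γ̄_i γ_i γ̄_i γ_j = γ̄_i γ_i γ_j` for `|i-j| = 1`. -/
theorem origami_lemma_c (n : ℕ) (t : Bool) (i j : Fin (n - 1)) (hij : adj i j) :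
    gen (!t) i * gen t i * gen (!t) i * gen t j = gen (!t) i * gen t i * gen t j := by
  have hji : adj j i := hij.symm.imp id id
  have hne : i ≠ j := by
    rintro rfl
    rcases hij with h | h <;> omega
  set a := gen (n := n) (!t) i with ha
  set b := gen (n := n) t i with hb
  set c := gen (n := n) t j with hc
  set d := gen (n := n) (!t) j with hd
  have f1 : c * a = a * c := gen_inter t j i hne.symm
  have f2 : c * b * c = c := gen_jones t j i hji
  have f3 : a * b * (d * c) * (a * b) = a * b := by
    have := gen_jonesA (!t) i j hij
    simpa [Bool.not_not, ← ha, ← hb, ← hc, ← hd] using this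
  have f4 : a * a = a := gen_idem (!t) i
  have key : a * b * c = a * b * d * a * c := by
    calc a * b * c = a * b * (d * c) * (a * b) * c := by rw [f3]
      _ = a * b * d * (c * a) * (b * c) := by simp only [mul_assoc]
      _ = a * b * d * (a * c) * (b * c) := by rw [f1]
      _ = a * b * d * a * (c * b * c) := by simp only [mul_assoc]
      _ = a * b * d * a * c := by rw [f2]
  calc a * b * a * c = a * b * (a * c) := by simp only [mul_assoc]
    _ = a * b * (c * a) := by rw [f1]
    _ = a * b * c * a := by simp only [mul_assoc]
    _ = a * b * d * a * c * a := by rw [key]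
    _ = a * b * d * a * (c * a) := by simp only [mul_assoc]
    _ = a * b * d * (a * (a * c)) := by rw [f1]; simp only [mul_assoc]
    _ = a * b * d * (a * a) * c := by simp only [mul_assoc]
    _ = a * b * d * a * c := by rw [f4]
    _ = a * b * c := key.symm
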